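/- Let Q and K' be n×n real symmetric positive semidefinite matrices, R an s×s real symmetric positive definite matrix, A an n×n real matrix, B an n×s real matrix, and p ∈ [0,1]. Set Λ = AᵀK'B(R + BᵀK'B)⁻¹BᵀK'A, L = Q + AᵀK'A, and K = L − pΛ. Let w : Ω → ℝⁿ be a zero-mean random vector with covariance matrix W (components square-integrable). Then for every x ∈ ℝⁿ: xᵀKx + tr(K'W) = p·( xᵀQx + inf over u ∈ ℝˢ of [ uᵀRu + E[(Ax + Bu + w)ᵀK'(Ax + Bu + w)] ] ) + (1−p)·( xᵀQx + E[(Ax + w)ᵀK'(Ax + w)] ), and the infimum is attained at u = −(R + BᵀK'B)⁻¹BᵀK'A x. -/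

import Mathlib

/-!
A centred noise with covariance `W` contributes exactly `tr(K'W)` to the expected quadratic cost:
`E[(v + w)ᵀK'(v + w)] = vᵀK'v + tr(K'W)` for every deterministic `v`. The cost of a control `u`
is therefore the quadratic `uᵀSu + 2uᵀc + const` with `S = R + BᵀK'B` positive definite and
`c = BᵀK'Ax`; completing the square shows that its infimum `const − cᵀS⁻¹c` is attained at
`u = −S⁻¹c`, and `cᵀS⁻¹c = xᵀΛx` because `K'` is symmetric. Both sides are then affine in `p`.
-/

open Matrix MeasureTheory

namespace Matrix

variable {ι κ α : Type*} [Fintype ι] [Fintype κ] [CommRing α]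

lemma dotProduct_mulVec_transpose_mul_mul (N : Matrix ι κ α) (T : Matrix ι ι α) (x : κ → α) :
    x ⬝ᵥ ((Nᵀ * T * N) *ᵥ x) = (N *ᵥ x) ⬝ᵥ (T *ᵥ (N *ᵥ x)) := by
  rw [← mulVec_mulVec, ← mulVec_mulVec, dotProduct_transpose_mulVec, dotProduct_comm]

lemma dotProduct_mulVec_eq_sum (M : Matrix ι ι α) (a : ι → α) :
    a ⬝ᵥ (M *ᵥ a) = ∑ i, ∑ j, M i j * (a i * a j) := by
  simp only [dotProduct, mulVec, Finset.mul_sum]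
  exact Finset.sum_congr rfl fun i _ => Finset.sum_congr rfl fun j _ => by ring

lemma IsSymm.dotProduct_mulVec_comm {M : Matrix ι ι α} (hM : M.IsSymm) (a b : ι → α) :
    a ⬝ᵥ (M *ᵥ b) = b ⬝ᵥ (M *ᵥ a) := by
  rw [← dotProduct_transpose_mulVec, hM.eq]

lemma IsSymm.dotProduct_mulVec_add_mulVec {M : Matrix ι ι α} (hM : M.IsSymm)
    (B : Matrix ι κ α) (v : ι → α) (u : κ → α) :
    (v + B *ᵥ u) ⬝ᵥ (M *ᵥ (v + B *ᵥ u))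
      = v ⬝ᵥ (M *ᵥ v) + 2 * (u ⬝ᵥ ((Bᵀ * M) *ᵥ v)) + u ⬝ᵥ ((Bᵀ * M * B) *ᵥ u) := by
  have hcross : (B *ᵥ u) ⬝ᵥ (M *ᵥ v) = u ⬝ᵥ ((Bᵀ * M) *ᵥ v) := by
    rw [← mulVec_mulVec, dotProduct_transpose_mulVec, dotProduct_comm]
  rw [dotProduct_mulVec_transpose_mul_mul, mulVec_add, dotProduct_add, add_dotProduct,
    add_dotProduct, hM.dotProduct_mulVec_comm v (B *ᵥ u), hcross]
  ring

lemma IsSymm.dotProduct_mulVec_add_two_mul_eq {S : Matrix κ κ α} (hS : S.IsSymm)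
    {c u₀ : κ → α} (hu₀ : S *ᵥ u₀ = -c) (u : κ → α) :
    u ⬝ᵥ (S *ᵥ u) + 2 * (u ⬝ᵥ c) = (u - u₀) ⬝ᵥ (S *ᵥ (u - u₀)) + u₀ ⬝ᵥ c := by
  rw [mulVec_sub, dotProduct_sub, sub_dotProduct, sub_dotProduct, hS.dotProduct_mulVec_comm u₀,
    hu₀, dotProduct_neg, dotProduct_neg]
  ring

lemma mulVec_nonsing_inv_mulVec [DecidableEq κ] {S : Matrix κ κ α} (hdet : IsUnit S.det)
    (c : κ → α) : S *ᵥ (S⁻¹ *ᵥ c) = c := by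
  rw [mulVec_mulVec, mul_nonsing_inv S hdet, one_mulVec]

lemma IsSymm.dotProduct_mulVec_add_two_mul_neg_inv_mulVec [DecidableEq κ] {S : Matrix κ κ α}
    (hS : S.IsSymm) (hdet : IsUnit S.det) (c : κ → α) :
    -(S⁻¹ *ᵥ c) ⬝ᵥ (S *ᵥ -(S⁻¹ *ᵥ c)) + 2 * (-(S⁻¹ *ᵥ c) ⬝ᵥ c) = -(c ⬝ᵥ (S⁻¹ *ᵥ c)) := by
  rw [hS.dotProduct_mulVec_add_two_mul_eq (by rw [mulVec_neg, mulVec_nonsing_inv_mulVec hdet]), sub_self, mulVec_zero, dotProduct_zero,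
    zero_add, neg_dotProduct, dotProduct_comm]

lemma PosDef.neg_dotProduct_inv_mulVec_le [DecidableEq κ] {S : Matrix κ κ ℝ} (hS : S.PosDef)
    (c u : κ → ℝ) : -(c ⬝ᵥ (S⁻¹ *ᵥ c)) ≤ u ⬝ᵥ (S *ᵥ u) + 2 * (u ⬝ᵥ c) := by
  have hu₀ : S *ᵥ -(S⁻¹ *ᵥ c) = -c := by
    rw [mulVec_neg, mulVec_nonsing_inv_mulVec ((isUnit_iff_isUnit_det S).mp hS.isUnit)]
  have hnonneg := hS.posSemidef.dotProduct_mulVec_nonneg (u - -(S⁻¹ *ᵥ c))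
  rw [star_trivial] at hnonneg
  rw [(isHermitian_iff_isSymm.mp hS.isHermitian).dotProduct_mulVec_add_two_mul_eq hu₀,
    neg_dotProduct, dotProduct_comm]
  linarith

lemma PosDef.iInf_eq_apply_neg_inv_mulVec [DecidableEq κ] {S : Matrix κ κ ℝ} (hS : S.PosDef)
    {c : κ → ℝ} {k : ℝ} {f : (κ → ℝ) → ℝ} (hf : ∀ u, f u = u ⬝ᵥ (S *ᵥ u) + 2 * (u ⬝ᵥ c) + k) :
    (⨅ u, f u) = f (-(S⁻¹ *ᵥ c)) ∧ f (-(S⁻¹ *ᵥ c)) = k - c ⬝ᵥ (S⁻¹ *ᵥ c) := by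
  have hmin : f (-(S⁻¹ *ᵥ c)) = k - c ⬝ᵥ (S⁻¹ *ᵥ c) := by
    rw [hf, (isHermitian_iff_isSymm.mp hS.isHermitian).dotProduct_mulVec_add_two_mul_neg_inv_mulVec
      ((isUnit_iff_isUnit_det S).mp hS.isUnit)]
    ring
  refine ⟨ciInf_eq_of_forall_ge_of_forall_gt_exists_lt (fun u => ?_) fun _ h => ⟨_, h⟩, hmin⟩
  rw [hmin, hf]
  linarith [hS.neg_dotProduct_inv_mulVec_le c u]

end Matrix

section Noise

variable {ι Ω : Type*} [MeasurableSpace Ω] {μ : Measure Ω} [IsProbabilityMeasure μ]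
  {w : Ω → ι → ℝ} {W : Matrix ι ι ℝ}

lemma integral_add_mul_add (hL2 : ∀ i, MemLp (fun ω => w ω i) 2 μ)
    (hmean : ∀ i, ∫ ω, w ω i ∂μ = 0) (hcov : ∀ i j, ∫ ω, w ω i * w ω j ∂μ = W i j)
    (v : ι → ℝ) (i j : ι) :
    ∫ ω, (v i + w ω i) * (v j + w ω j) ∂μ = v i * v j + W i j := by
  have hwi : Integrable (fun ω => w ω i) μ := (hL2 i).integrable one_le_two
  have hwj : Integrable (fun ω => w ω j) μ := (hL2 j).integrable one_le_two
  have hww : Integrable (fun ω => w ω i * w ω j) μ := (hL2 i).integrable_mul (hL2 j)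
  have hlin : Integrable (fun ω => v i * w ω j + w ω i * v j) μ :=
    (hwj.const_mul _).fun_add (hwi.mul_const _)
  have hexpand : (fun ω => (v i + w ω i) * (v j + w ω j))
      = fun ω => v i * v j + ((v i * w ω j + w ω i * v j) + w ω i * w ω j) := by
    funext ω; ring
  rw [hexpand, integral_add (integrable_const _) (hlin.fun_add hww), integral_add hlin hww,
    integral_add (hwj.const_mul _) (hwi.mul_const _), integral_const, integral_const_mul,
    integral_mul_const, hmean, hmean, hcov]
  simp

lemma integral_dotProduct_mulVec_add [Fintype ι] (hL2 : ∀ i, MemLp (fun ω => w ω i) 2 μ)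
    (hmean : ∀ i, ∫ ω, w ω i ∂μ = 0) (hcov : ∀ i j, ∫ ω, w ω i * w ω j ∂μ = W i j)
    (M : Matrix ι ι ℝ) (v : ι → ℝ) :
    ∫ ω, (v + w ω) ⬝ᵥ (M *ᵥ (v + w ω)) ∂μ = v ⬝ᵥ (M *ᵥ v) + (M * W).trace := by
  have hint : ∀ i j, Integrable (fun ω => M i j * ((v i + w ω i) * (v j + w ω j))) μ :=
    fun i j => ((((memLp_const (v i)).add (hL2 i)).integrable_mul
      ((memLp_const (v j)).add (hL2 j)))).const_mul _
  have hW : W.IsSymm := IsSymm.ext fun i j => by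
    rw [← hcov, ← hcov]; simp_rw [mul_comm]
  simp_rw [dotProduct_mulVec_eq_sum, Pi.add_apply]
  rw [integral_finsetSum _ fun i _ => integrable_finsetSum _ fun j _ => hint i j]
  simp_rw [integral_finsetSum _ fun j _ => hint _ j, integral_const_mul,
    integral_add_mul_add hL2 hmean hcov, trace, diag, mul_apply, mul_add, Finset.sum_add_distrib,
    hW.apply]

end Noise

theorem bellman_one_step_full_info_general {n s : ℕ}
    {Ω : Type*} [MeasurableSpace Ω] (μ : Measure Ω) [IsProbabilityMeasure μ]
    (Q K' : Matrix (Fin n) (Fin n) ℝ) (R : Matrix (Fin s) (Fin s) ℝ)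
    (A : Matrix (Fin n) (Fin n) ℝ) (B : Matrix (Fin n) (Fin s) ℝ)
    (p : ℝ)
    (hK' : K'.PosSemidef) (hR : R.PosDef)
    (w : Ω → Fin n → ℝ) (W : Matrix (Fin n) (Fin n) ℝ)
    (hL2 : ∀ i, MemLp (fun ω => w ω i) 2 μ)
    (hmean : ∀ i, ∫ ω, w ω i ∂μ = 0)
    (hcov : ∀ i j, ∫ ω, w ω i * w ω j ∂μ = W i j) :
    ∀ x : Fin n → ℝ,
      letI Λ : Matrix (Fin n) (Fin n) ℝ :=
        Aᵀ * K' * B * (R + Bᵀ * K' * B)⁻¹ * (Bᵀ * K' * A)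
      letI L : Matrix (Fin n) (Fin n) ℝ := Q + Aᵀ * K' * A
      letI K : Matrix (Fin n) (Fin n) ℝ := L - p • Λ
      letI g : (Fin s → ℝ) → ℝ := fun u =>
        u ⬝ᵥ (R *ᵥ u)
          + ∫ ω, (A *ᵥ x + B *ᵥ u + w ω) ⬝ᵥ (K' *ᵥ (A *ᵥ x + B *ᵥ u + w ω)) ∂μ
      (x ⬝ᵥ (K *ᵥ x) + (K' * W).trace
          = p * (x ⬝ᵥ (Q *ᵥ x) + ⨅ u : Fin s → ℝ, g u)
            + (1 - p) * (x ⬝ᵥ (Q *ᵥ x)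
                + ∫ ω, (A *ᵥ x + w ω) ⬝ᵥ (K' *ᵥ (A *ᵥ x + w ω)) ∂μ))
        ∧ (⨅ u : Fin s → ℝ, g u) = g (-(((R + Bᵀ * K' * B)⁻¹ * (Bᵀ * K' * A)) *ᵥ x)) := by
  intro x
  have hK'symm : K'.IsSymm := isHermitian_iff_isSymm.mp hK'.isHermitian
  set S := R + Bᵀ * K' * B
  have hS : S.PosDef := hR.add_posSemidef (by simpa using hK'.conjTranspose_mul_mul_same B)
  set c := (Bᵀ * K' * A) *ᵥ x
  have hE := integral_dotProduct_mulVec_add hL2 hmean hcov K'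
  set g : (Fin s → ℝ) → ℝ := fun u =>
    u ⬝ᵥ (R *ᵥ u) + ∫ ω, (A *ᵥ x + B *ᵥ u + w ω) ⬝ᵥ (K' *ᵥ (A *ᵥ x + B *ᵥ u + w ω)) ∂μ
  have hg : ∀ u, g u = u ⬝ᵥ (S *ᵥ u) + 2 * (u ⬝ᵥ c)
      + ((A *ᵥ x) ⬝ᵥ (K' *ᵥ (A *ᵥ x)) + (K' * W).trace) := by
    intro u
    simp only [g, hE, hK'symm.dotProduct_mulVec_add_mulVec, S, c, add_mulVec, dotProduct_add,
      mulVec_mulVec, Matrix.mul_assoc]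
    ring
  obtain ⟨hinf, hgu₀⟩ := hS.iInf_eq_apply_neg_inv_mulVec hg
  have hΛ : x ⬝ᵥ ((Aᵀ * K' * B * S⁻¹ * (Bᵀ * K' * A)) *ᵥ x) = c ⬝ᵥ (S⁻¹ *ᵥ c) := by
    have hT : (Bᵀ * K' * A)ᵀ = Aᵀ * K' * B := by
      rw [transpose_mul, transpose_mul, transpose_transpose, hK'symm.eq, Matrix.mul_assoc]
    rw [← dotProduct_mulVec_transpose_mul_mul, hT]
  refine ⟨?_, by rw [← mulVec_mulVec]; exact hinf⟩
  rw [hinf, hgu₀, hE, sub_mulVec, add_mulVec, smul_mulVec, dotProduct_sub, dotProduct_add,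
    dotProduct_smul, hΛ, dotProduct_mulVec_transpose_mul_mul, smul_eq_mul]
  ring

/-- One-step Bellman recursion of Theorem 1 (fully observed states, perfect match,
symmetric reliability): with `Λ = AᵀK'B(R + BᵀK'B)⁻¹BᵀK'A`, `L = Q + AᵀK'A`,
`K = L − pΛ`, and `w` a zero-mean random vector with covariance `W`, for every `x`:
`xᵀKx + tr(K'W) = p(xᵀQx + inf_u [uᵀRu + E[(Ax + Bu + w)ᵀK'(Ax + Bu + w)]])`
`+ (1 − p)(xᵀQx + E[(Ax + w)ᵀK'(Ax + w)])`, the infimum being attained at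
`u = −(R + BᵀK'B)⁻¹BᵀK'A x`. -/
theorem bellman_one_step_full_info {n s : ℕ}
    {Ω : Type*} [MeasurableSpace Ω] (μ : Measure Ω) [IsProbabilityMeasure μ]
    (Q K' : Matrix (Fin n) (Fin n) ℝ) (R : Matrix (Fin s) (Fin s) ℝ)
    (A : Matrix (Fin n) (Fin n) ℝ) (B : Matrix (Fin n) (Fin s) ℝ)
    (p : ℝ) (hp : p ∈ Set.Icc (0 : ℝ) 1)
    (hQ : Q.PosSemidef) (hK' : K'.PosSemidef) (hR : R.PosDef)
    (w : Ω → Fin n → ℝ) (W : Matrix (Fin n) (Fin n) ℝ)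
    (hL2 : ∀ i, MemLp (fun ω => w ω i) 2 μ)
    (hmean : ∀ i, ∫ ω, w ω i ∂μ = 0)
    (hcov : ∀ i j, ∫ ω, w ω i * w ω j ∂μ = W i j) :
    ∀ x : Fin n → ℝ,
      letI Λ : Matrix (Fin n) (Fin n) ℝ :=
        Aᵀ * K' * B * (R + Bᵀ * K' * B)⁻¹ * (Bᵀ * K' * A)
      letI L : Matrix (Fin n) (Fin n) ℝ := Q + Aᵀ * K' * A
      letI K : Matrix (Fin n) (Fin n) ℝ := L - p • Λ
      letI g : (Fin s → ℝ) → ℝ := fun u =>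
        u ⬝ᵥ (R *ᵥ u)
          + ∫ ω, (A *ᵥ x + B *ᵥ u + w ω) ⬝ᵥ (K' *ᵥ (A *ᵥ x + B *ᵥ u + w ω)) ∂μ
      (x ⬝ᵥ (K *ᵥ x) + (K' * W).trace
          = p * (x ⬝ᵥ (Q *ᵥ x) + ⨅ u : Fin s → ℝ, g u)
            + (1 - p) * (x ⬝ᵥ (Q *ᵥ x)
                + ∫ ω, (A *ᵥ x + w ω) ⬝ᵥ (K' *ᵥ (A *ᵥ x + w ω)) ∂μ))
        ∧ (⨅ u : Fin s → ℝ, g u) = g (-(((R + Bᵀ * K' * B)⁻¹ * (Bᵀ * K' * A)) *ᵥ x)) :=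
  bellman_one_step_full_info_general μ Q K' R A B p hK' hR w W hL2 hmean hcov
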